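/- arXiv:math/9703216 — 5 statements merged into one kernel-verified Lean document; each statement's English description precedes it below -/
import Mathlib

section
/- For all x with |x| ≤ 1, (arcsin x)² = ∑_{k=0}^∞ x^{2k+2} · 4^k · (k!)² / ((k+1) · (2k+1)!). -/
/-!
Put `θ = arcsin |x| ∈ [0, π/2]`, so that `sin θ = |x|`, and `B k = 4^k (k!)² / (2k+1)!`.
Integrating the reduction formula for `∫ sin^(2n)` once more gives
`θ² = ∑_{k<n} B k / (k+1) sin^(2k+2) θ + 2 (2n+1) B n ∫₀^θ (θ - t) sin^(2n) t dt`.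
Jordan's inequality gives `θ - t ≤ (π/2) cos t`, so the remainder is at most `π B n`; and
`B n ² (2n+1)` is the `n`-th Wallis product, which is at most `π/2`, so `B n → 0`.
-/

open Nat Real Filter Topology intervalIntegral

theorem integral_sin_pow_mul_cos (m : ℕ) (a b : ℝ) :
    ∫ x in a..b, sin x ^ m * cos x = (sin b ^ (m + 1) - sin a ^ (m + 1)) / (m + 1) := by
  simpa using integral_sin_pow_mul_cos_pow_odd (a := a) (b := b) m 0

noncomputable def sinPowIntegral (m : ℕ) (θ : ℝ) : ℝ := ∫ t in 0..θ, sin t ^ m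

noncomputable def sinPowDoubleIntegral (m : ℕ) (θ : ℝ) : ℝ :=
  ∫ ψ in 0..θ, sinPowIntegral m ψ

theorem continuous_sinPowIntegral (m : ℕ) : Continuous (sinPowIntegral m) :=
  continuous_primitive (fun _ _ => (continuous_sin.pow m).intervalIntegrable _ _) 0

theorem hasDerivAt_sinPowIntegral (m : ℕ) (θ : ℝ) :
    HasDerivAt (sinPowIntegral m) (sin θ ^ m) θ :=
  integral_hasDerivAt_right ((continuous_sin.pow m).intervalIntegrable _ _)
    ((continuous_sin.pow m).stronglyMeasurableAtFilter _ _) (continuous_sin.pow m).continuousAt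

theorem sinPowIntegral_add_two (m : ℕ) (θ : ℝ) :
    sinPowIntegral (m + 2) θ =
      -(sin θ ^ (m + 1) * cos θ) / (m + 2) + (m + 1) / (m + 2) * sinPowIntegral m θ := by
  simp [sinPowIntegral, integral_sin_pow, neg_div]

theorem sinPowDoubleIntegral_add_two (m : ℕ) (θ : ℝ) :
    sinPowDoubleIntegral (m + 2) θ =
      -sin θ ^ (m + 2) / (m + 2) ^ 2 + (m + 1) / (m + 2) * sinPowDoubleIntegral m θ := by
  have hcos : ∫ ψ in 0..θ, -(sin ψ ^ (m + 1) * cos ψ) / (m + 2) =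
      -sin θ ^ (m + 2) / (m + 2) ^ 2 := by
    simp only [neg_div, integral_neg, integral_div, integral_sin_pow_mul_cos, sin_zero]
    push_cast
    rw [zero_pow (by lia), sub_zero, div_div]
    ring
  simp only [sinPowDoubleIntegral, sinPowIntegral_add_two]
  rw [integral_add (by apply Continuous.intervalIntegrable; fun_prop)
      (((continuous_sinPowIntegral m).const_mul _).intervalIntegrable _ _),
    integral_const_mul, hcos]

theorem sinPowDoubleIntegral_eq_integral_sub_mul (m : ℕ) (θ : ℝ) :
    sinPowDoubleIntegral m θ = ∫ t in 0..θ, (θ - t) * sin t ^ m := by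
  have hderiv : ∀ t ∈ Set.uIcc 0 θ, HasDerivAt (fun t => (θ - t) * sinPowIntegral m t)
      (-sinPowIntegral m t + (θ - t) * sin t ^ m) t := fun t _ => by
    have hlin : HasDerivAt (fun t => θ - t) (-1) t := by
      simpa using (hasDerivAt_id t).const_sub θ
    exact (hlin.mul (hasDerivAt_sinPowIntegral m t)).congr_deriv (by ring)
  have hftc := integral_eq_sub_of_hasDerivAt hderiv
    (by apply Continuous.intervalIntegrable; have := continuous_sinPowIntegral m; fun_prop)
  rw [integral_add
    (by apply Continuous.intervalIntegrable; have := continuous_sinPowIntegral m; fun_prop)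
    (by apply Continuous.intervalIntegrable; fun_prop), integral_neg] at hftc
  have hzero : sinPowIntegral m 0 = 0 := integral_same
  simp only [sub_self, zero_mul, hzero, mul_zero] at hftc
  rw [sinPowDoubleIntegral]
  linarith

theorem sinPowDoubleIntegral_nonneg (m : ℕ) {θ : ℝ} (h0 : 0 ≤ θ) (hπ : θ ≤ π) :
    0 ≤ sinPowDoubleIntegral m θ := by
  rw [sinPowDoubleIntegral_eq_integral_sub_mul]
  refine integral_nonneg h0 fun t ht => mul_nonneg (by linarith [ht.2]) (pow_nonneg ?_ m)
  exact sin_nonneg_of_nonneg_of_le_pi ht.1 (by linarith [ht.2])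

theorem sinPowDoubleIntegral_le (m : ℕ) {θ : ℝ} (h0 : 0 ≤ θ) (hπ : θ ≤ π / 2) :
    sinPowDoubleIntegral m θ ≤ π / (2 * (m + 1)) := by
  have hweight : ∀ t ∈ Set.Icc 0 θ, (θ - t) * sin t ^ m ≤ π / 2 * (sin t ^ m * cos t) := by
    intro t ⟨ht0, htθ⟩
    have hjordan := mul_le_sin (x := π / 2 - t) (by linarith) (by linarith)
    rw [sin_pi_div_two_sub] at hjordan
    have hsin : 0 ≤ sin t ^ m := pow_nonneg (sin_nonneg_of_nonneg_of_le_pi ht0 (by linarith)) m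
    calc (θ - t) * sin t ^ m ≤ π / 2 * (2 / π * (π / 2 - t)) * sin t ^ m := by
          gcongr
          field_simp
          linarith
      _ ≤ π / 2 * cos t * sin t ^ m := by gcongr
      _ = π / 2 * (sin t ^ m * cos t) := by ring
  calc sinPowDoubleIntegral m θ ≤ ∫ t in 0..θ, π / 2 * (sin t ^ m * cos t) := by
        rw [sinPowDoubleIntegral_eq_integral_sub_mul]
        exact integral_mono_on h0 (by apply Continuous.intervalIntegrable; fun_prop)
          (by apply Continuous.intervalIntegrable; fun_prop) hweight
    _ = π / 2 * (sin θ ^ (m + 1) / (m + 1)) := by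
        simp [integral_sin_pow_mul_cos]
    _ ≤ π / 2 * (1 / (m + 1)) := by
        gcongr
        exact pow_le_one₀ (sin_nonneg_of_nonneg_of_le_pi h0 (by linarith)) (sin_le_one θ)
    _ = π / (2 * (m + 1)) := by field_simp

/-- `wallisCoeff k = ∫₀^(π/2) sin^(2k+1)`. -/
noncomputable def wallisCoeff (k : ℕ) : ℝ := 4 ^ k * (k ! : ℝ) ^ 2 / (2 * k + 1)!

theorem wallisCoeff_nonneg (k : ℕ) : 0 ≤ wallisCoeff k := by
  unfold wallisCoeff
  positivity

theorem wallisCoeff_succ (k : ℕ) :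
    (2 * k + 3) * wallisCoeff (k + 1) = (2 * k + 2) * wallisCoeff k := by
  simp only [wallisCoeff, show 2 * (k + 1) + 1 = 2 * k + 1 + 1 + 1 by ring, factorial_succ]
  push_cast
  field_simp
  ring

theorem wallisCoeff_sq_mul (k : ℕ) : wallisCoeff k ^ 2 * (2 * k + 1) = Wallis.W k := by
  rw [Wallis.W_eq_factorial_ratio, wallisCoeff, factorial_succ, show (4 : ℝ) = 2 ^ 2 by norm_num,
    ← pow_mul]
  push_cast
  field_simp
  ring

theorem tendsto_wallisCoeff_atTop : Tendsto wallisCoeff atTop (𝓝 0) := by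
  have hodd : Tendsto (fun k : ℕ => (2 * k + 1 : ℝ)) atTop atTop :=
    tendsto_atTop_mono (fun k => by linarith) tendsto_natCast_atTop_atTop
  have hsqrt := (Wallis.tendsto_W_nhds_pi_div_two.div_atTop hodd).sqrt
  rw [Real.sqrt_zero] at hsqrt
  refine hsqrt.congr fun k => ?_
  rw [← wallisCoeff_sq_mul, mul_div_cancel_right₀ _ (by positivity),
    sqrt_sq (wallisCoeff_nonneg k)]

theorem sq_eq_sum_wallisCoeff_add_sinPowDoubleIntegral (n : ℕ) (θ : ℝ) :
    θ ^ 2 = ∑ k ∈ Finset.range n, wallisCoeff k / (k + 1) * sin θ ^ (2 * k + 2)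
      + 2 * (2 * n + 1) * wallisCoeff n * sinPowDoubleIntegral (2 * n) θ := by
  induction n with
  | zero =>
    norm_num [wallisCoeff, sinPowDoubleIntegral, sinPowIntegral, integral_id, mul_div_cancel₀]
  | succ n ih =>
    rw [ih, Finset.sum_range_succ, add_assoc]
    congr 1
    rw [show 2 * (n + 1) = 2 * n + 2 by ring, sinPowDoubleIntegral_add_two]
    push_cast
    linear_combination (norm := skip) (2 * (sin θ ^ (2 * n + 2) / (2 * n + 2) ^ 2
      - (2 * n + 1) / (2 * n + 2) * sinPowDoubleIntegral (2 * n) θ)) * wallisCoeff_succ n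
    field_simp
    ring

theorem hasSum_wallisCoeff_mul_sin_pow {θ : ℝ} (h0 : 0 ≤ θ) (hπ : θ ≤ π / 2) :
    HasSum (fun k : ℕ => wallisCoeff k / (k + 1) * sin θ ^ (2 * k + 2)) (θ ^ 2) := by
  set R : ℕ → ℝ := fun n => 2 * (2 * n + 1) * wallisCoeff n * sinPowDoubleIntegral (2 * n) θ
  have hR_nonneg : ∀ n, 0 ≤ R n := fun n =>
    mul_nonneg (by positivity [wallisCoeff_nonneg n])
      (sinPowDoubleIntegral_nonneg _ h0 (by linarith [pi_pos]))
  have hR_le : ∀ n, R n ≤ π * wallisCoeff n := fun n => calc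
    R n ≤ 2 * (2 * n + 1) * wallisCoeff n * (π / (2 * ((2 * n : ℕ) + 1))) :=
      mul_le_mul_of_nonneg_left (sinPowDoubleIntegral_le _ h0 hπ)
        (by positivity [wallisCoeff_nonneg n])
    _ = π * wallisCoeff n := by push_cast; field_simp
  have hR : Tendsto R atTop (𝓝 0) := squeeze_zero hR_nonneg hR_le <| by
    simpa using tendsto_wallisCoeff_atTop.const_mul π
  refine (hasSum_iff_tendsto_nat_of_nonneg (fun k => ?_) _).2 ?_
  · exact mul_nonneg (div_nonneg (wallisCoeff_nonneg k) (by positivity))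
      (Even.pow_nonneg ⟨k + 1, by ring⟩ _)
  · have hlim := (tendsto_const_nhds (x := θ ^ 2)).sub hR
    rw [sub_zero] at hlim
    exact hlim.congr fun n =>
      (eq_sub_of_add_eq (sq_eq_sum_wallisCoeff_add_sinPowDoubleIntegral n θ).symm).symm

theorem stmt_5 (x : ℝ) (hx : |x| ≤ 1) :
    (Real.arcsin x) ^ 2 =
      ∑' k : ℕ, x ^ (2 * k + 2) * 4 ^ k * (k ! : ℝ) ^ 2 / ((k + 1) * (2 * k + 1)!) := by
  have hsum := hasSum_wallisCoeff_mul_sin_pow (arcsin_nonneg.2 (abs_nonneg x))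
    (arcsin_le_pi_div_two |x|)
  rw [sin_arcsin (by linarith [abs_nonneg x]) hx] at hsum
  have harcsin : arcsin |x| ^ 2 = arcsin x ^ 2 := by
    rcases abs_choice x with h | h <;> simp [h, arcsin_neg]
  rw [← harcsin, ← hsum.tsum_eq]
  refine tsum_congr fun k => ?_
  rw [Even.pow_abs ⟨k + 1, by ring⟩, wallisCoeff]
  field_simp
end

section
/- If the coefficients a : ℕ → ℝ satisfy a(k+2) = k³ a(k) / (k(k+1)(k+2)) for k ≥ 1, equivalently k³ a(k) - k(k+1)(k+2) a(k+2) = 0 for all k, with a(0)=a(1)=0, a(2)=1, and a(2k+1)=0 for all k, then a(2k+2) = 4^k (k!)² / ((k+1)(2k+1)!) for all k ≥ 0. -/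
open Nat

theorem stmt_6 (a : ℕ → ℝ)
    (hrec : ∀ k : ℕ, (k : ℝ) ^ 3 * a k - k * (k + 1) * (k + 2) * a (k + 2) = 0)
    (h0 : a 0 = 0) (h1 : a 1 = 0) (h2 : a 2 = 1)
    (hodd : ∀ k : ℕ, a (2 * k + 1) = 0) :
    ∀ k : ℕ, a (2 * k + 2) = 4 ^ k * (k ! : ℝ) ^ 2 / ((k + 1) * (2 * k + 1)!) := by
  intro k
  induction k with
  | zero => simp [h2]
  | succ n ih =>
    have h := hrec (2 * n + 2)
    push_cast at h
    have key : a (2 * (n + 1) + 2) = (2 * (n:ℝ) + 2) ^ 2 * a (2 * n + 2) /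
        ((2 * n + 3) * (2 * n + 4)) := by
      have hne : ((2 * (n:ℝ) + 3) * (2 * n + 4)) ≠ 0 := by positivity
      have : (2 * (n:ℝ) + 2) * ((2 * n + 3) * (2 * n + 4)) * a (2 * (n + 1) + 2)
          = (2 * n + 2) * ((2 * n + 2) ^ 2 * a (2 * n + 2)) := by
        have h24 : 2 * (n + 1) + 2 = 2 * n + 2 + 2 := by ring
        rw [h24]; linarith [h]
      have h2ne : (2 * (n:ℝ) + 2) ≠ 0 := by positivity
      field_simp
      nlinarith [this]
    rw [key, ih]
    have hf1 : ((n + 1)! : ℝ) = (n + 1) * n ! := by push_cast [Nat.factorial_succ]; ring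
    have hf2 : ((2 * (n + 1) + 1)! : ℝ) = (2 * n + 3) * ((2 * n + 2) * (2 * n + 1)!) := by
      have : 2 * (n + 1) + 1 = (2 * n + 2) + 1 := by ring
      rw [this, Nat.factorial_succ, Nat.factorial_succ]
      push_cast; ring
    have hne1 : ((n:ℝ) + 1) * (2 * n + 1)! ≠ 0 := by positivity
    have hne2 : ((2 * (n:ℝ)) + 3) * (2 * n + 4) ≠ 0 := by positivity
    rw [hf1, hf2]
    push_cast
    have hfac : ((2 * n + 1)! : ℝ) ≠ 0 := by positivity
    field_simp
    ring
end

section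
/- The Apéry numbers A(n) = ∑_{k=0}^n C(n,k)² C(n+k,k)² satisfy the recurrence (n+1)³ A(n) - (2n+3)(17n² + 51n + 39) A(n+1) + (n+2)³ A(n+2) = 0 for all natural numbers n. -/
open Nat

/-- The Apéry numbers `A(n) = ∑_{k=0}^n C(n,k)² C(n+k,k)²`. -/
def apery (n : ℕ) : ℤ :=
  ∑ k ∈ Finset.range (n + 1), ((n.choose k : ℤ)) ^ 2 * (((n + k).choose k : ℤ)) ^ 2

/-- Summand of the Apéry numbers. -/
def aperyF (n k : ℕ) : ℤ := ((n.choose k : ℤ)) ^ 2 * (((n + k).choose k : ℤ)) ^ 2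

/-- The Zeilberger certificate for the Apéry recurrence (shifted by one). -/
def aperyB (n k : ℕ) : ℤ :=
  4 * (2 * (n : ℤ) + 3) * ((k : ℤ) * (2 * k + 1) - (2 * (n : ℤ) + 3) ^ 2)
    * (((n + 1).choose k : ℤ)) ^ 2 * (((n + 1 + k).choose k : ℤ)) ^ 2

/-- Telescoping sequence. -/
def aperyG (n : ℕ) : ℕ → ℤ
  | 0 => 0
  | (k + 1) => aperyB n k

lemma apery_pointwise (n k : ℕ) :
    ((n : ℤ) + 1) ^ 3 * aperyF n k
      - (2 * (n : ℤ) + 3) * (17 * (n : ℤ) ^ 2 + 51 * n + 39) * aperyF (n + 1) k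
      + ((n : ℤ) + 2) ^ 3 * aperyF (n + 2) k = aperyG n (k + 1) - aperyG n k := by
  match k with
  | 0 =>
      simp only [aperyF, aperyG, aperyB, Nat.add_zero, Nat.choose_zero_right,
        Nat.cast_zero, Nat.cast_one]
      push_cast
      ring
  | (j + 1) =>
      simp only [aperyG]
      rcases lt_or_ge n j with hnj | hnj
      · rcases eq_or_lt_of_le (Nat.succ_le_of_lt hnj) with hj | hj
        · -- j = n + 1, k = n + 2
          obtain rfl : j = n + 1 := hj.symm
          have hc0 : n.choose (n + 2) = 0 := Nat.choose_eq_zero_of_lt (by omega)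
          have hc1 : (n + 1).choose (n + 2) = 0 := Nat.choose_eq_zero_of_lt (by omega)
          have hc2 : (n + 2).choose (n + 2) = 1 := Nat.choose_self _
          have hc3 : (n + 1).choose (n + 1) = 1 := Nat.choose_self _
          have r1 : (2 * n + 4) * (2 * n + 3).choose (n + 1)
              = (2 * n + 4).choose (n + 2) * (n + 2) := by
            have := Nat.add_one_mul_choose_eq (2 * n + 3) (n + 1)
            simpa [Nat.succ_eq_add_one] using this
          have r2 : (2 * n + 2).choose (n + 1) * (2 * n + 3)
              = (2 * n + 3).choose (n + 1) * (n + 2) := by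
            have h := Nat.choose_mul_succ_eq (2 * n + 2) (n + 1)
            rw [show 2 * n + 2 + 1 - (n + 1) = n + 2 by omega,
              show 2 * n + 2 + 1 = 2 * n + 3 by omega] at h
            exact h
          have q1 : (2 * (n : ℚ) + 4) * ((2 * n + 3).choose (n + 1) : ℚ)
              = ((2 * n + 4).choose (n + 2) : ℚ) * ((n : ℚ) + 2) := by exact_mod_cast r1
          have q2 : ((2 * n + 2).choose (n + 1) : ℚ) * (2 * (n : ℚ) + 3)
              = ((2 * n + 3).choose (n + 1) : ℚ) * ((n : ℚ) + 2) := by exact_mod_cast r2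
          have hn2 : ((n : ℚ) + 2) ≠ 0 := by positivity
          have hFH : ((2 * n + 4).choose (n + 2) : ℚ)
              = 2 * ((2 * n + 3).choose (n + 1) : ℚ) := by
            refine mul_right_cancel₀ hn2 ?_
            linear_combination - q1
          have hH : ((2 * n + 3).choose (n + 1) : ℚ)
              = ((2 * n + 2).choose (n + 1) : ℚ) * (2 * (n : ℚ) + 3) / ((n : ℚ) + 2) := by
            rw [eq_div_iff hn2]; linear_combination - q2
          simp only [aperyF, aperyB]
          rw [show n + 1 + 1 = n + 2 by omega]
          rw [show n + 2 + (n + 2) = 2 * n + 4 by omega,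
            show n + 1 + (n + 1) = 2 * n + 2 by omega]
          rw [hc0, hc1, hc2, hc3]
          qify
          push_cast
          rw [hFH, hH]
          field_simp
          ring
        · -- j ≥ n + 2, everything vanishes
          have h1 : n.choose (j + 1) = 0 := Nat.choose_eq_zero_of_lt (by omega)
          have h2 : (n + 1).choose (j + 1) = 0 := Nat.choose_eq_zero_of_lt (by omega)
          have h3 : (n + 2).choose (j + 1) = 0 := Nat.choose_eq_zero_of_lt (by omega)
          have h4 : (n + 1).choose j = 0 := Nat.choose_eq_zero_of_lt (by omega)
          simp [aperyF, aperyB, h1, h2, h3, h4]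
      · rcases eq_or_lt_of_le hnj with hj | hj
        · -- n = n, k = n + 1
          obtain rfl : n = j := hj.symm
          have hc0 : n.choose (n + 1) = 0 := Nat.choose_succ_self n
          have hc3 : (n + 1).choose (n + 1) = 1 := Nat.choose_self _
          have hc4 : (n + 2).choose (n + 1) = n + 2 := by
            rw [← Nat.choose_symm (by omega : n + 1 ≤ n + 2),
              show n + 2 - (n + 1) = 1 by omega, Nat.choose_one_right]
          have hc5 : (n + 1).choose n = n + 1 := by
            rw [← Nat.choose_symm (by omega : n ≤ n + 1),
              show n + 1 - n = 1 by omega, Nat.choose_one_right]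
          have r1 : (2 * n + 2).choose (n + 1) * (2 * n + 3)
              = (2 * n + 3).choose (n + 1) * (n + 2) := by
            have h := Nat.choose_mul_succ_eq (2 * n + 2) (n + 1)
            rw [show 2 * n + 2 + 1 - (n + 1) = n + 2 by omega,
              show 2 * n + 2 + 1 = 2 * n + 3 by omega] at h
            exact h
          have r2 : (2 * n + 1).choose n * (2 * n + 2)
              = (2 * n + 2).choose (n + 1) * (n + 1) := by
            have h := Nat.choose_mul_succ_eq (2 * n + 1) (n + 1)
            rw [show 2 * n + 1 + 1 - (n + 1) = n + 1 by omega,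
              show 2 * n + 1 + 1 = 2 * n + 2 by omega] at h
            have hs : (2 * n + 1).choose (n + 1) = (2 * n + 1).choose n := by
              rw [← Nat.choose_symm (by omega : n + 1 ≤ 2 * n + 1),
                show 2 * n + 1 - (n + 1) = n by omega]
            rw [hs] at h
            exact h
          have q1 : ((2 * n + 2).choose (n + 1) : ℚ) * (2 * (n : ℚ) + 3)
              = ((2 * n + 3).choose (n + 1) : ℚ) * ((n : ℚ) + 2) := by exact_mod_cast r1
          have q2 : ((2 * n + 1).choose n : ℚ) * (2 * (n : ℚ) + 2)
              = ((2 * n + 2).choose (n + 1) : ℚ) * ((n : ℚ) + 1) := by exact_mod_cast r2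
          have hn1 : ((n : ℚ) + 1) ≠ 0 := by positivity
          have hn2 : ((n : ℚ) + 2) ≠ 0 := by positivity
          have hG1 : ((2 * n + 1).choose n : ℚ) = ((2 * n + 2).choose (n + 1) : ℚ) / 2 := by
            rw [eq_div_iff (two_ne_zero)]
            refine mul_right_cancel₀ hn1 ?_
            linear_combination q2
          have hF2 : ((2 * n + 3).choose (n + 1) : ℚ)
              = ((2 * n + 2).choose (n + 1) : ℚ) * (2 * (n : ℚ) + 3) / ((n : ℚ) + 2) := by
            rw [eq_div_iff hn2]; linear_combination - q1
          simp only [aperyF, aperyB]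
          rw [show n + 2 + (n + 1) = 2 * n + 3 by omega,
            show n + 1 + (n + 1) = 2 * n + 2 by omega,
            show n + 1 + n = 2 * n + 1 by omega]
          rw [hc0, hc3, hc4, hc5]
          qify
          push_cast
          rw [hG1, hF2]
          field_simp
          ring
        · -- j + 1 ≤ n : the generic case
          have hk : j + 1 ≤ n := hj
          have hjn' : j ≤ n := by omega
          have R1 := Nat.choose_mul_succ_eq n (j + 1)
          have R2 := Nat.choose_mul_succ_eq (n + 1) (j + 1)
          have R3 := Nat.choose_mul_succ_eq (n + (j + 1)) (j + 1)
          have R4 := Nat.choose_mul_succ_eq (n + (j + 1) + 1) (j + 1)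
          have R5 := Nat.choose_succ_right_eq (n + 1) j
          have R6 := Nat.choose_succ_right_eq (n + (j + 1)) j
          rw [show n + 1 - (j + 1) = n - j by omega] at R1
          rw [show n + 1 + 1 - (j + 1) = n + 1 - j by omega,
            show n + 1 + 1 = n + 2 by omega] at R2
          rw [show n + (j + 1) + 1 - (j + 1) = n + 1 by omega] at R3
          rw [show n + (j + 1) + 1 + 1 - (j + 1) = n + 2 by omega,
            show n + (j + 1) + 1 + 1 = n + (j + 1) + 2 by omega] at R4
          rw [show n + (j + 1) - j = n + 1 by omega] at R6
          -- cast them to ℚ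
          have q1 : (n.choose (j + 1) : ℚ) * ((n : ℚ) + 1)
              = ((n + 1).choose (j + 1) : ℚ) * ((n : ℚ) - j) := by
            rw [show ((n : ℚ) - j) = ((n - j : ℕ) : ℚ) by rw [Nat.cast_sub hjn']]
            exact_mod_cast R1
          have q2 : ((n + 1).choose (j + 1) : ℚ) * ((n : ℚ) + 2)
              = ((n + 2).choose (j + 1) : ℚ) * ((n : ℚ) + 1 - j) := by
            rw [show ((n : ℚ) + 1 - j) = ((n + 1 - j : ℕ) : ℚ) by
              rw [Nat.cast_sub (by omega : j ≤ n + 1)]; push_cast; ring]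
            exact_mod_cast R2
          have q3 : ((n + (j + 1)).choose (j + 1) : ℚ) * ((n : ℚ) + j + 2)
              = ((n + (j + 1) + 1).choose (j + 1) : ℚ) * ((n : ℚ) + 1) := by
            have h : ((n + (j + 1)).choose (j + 1) : ℚ) * ((n + (j + 1) + 1 : ℕ) : ℚ)
                = ((n + (j + 1) + 1).choose (j + 1) : ℚ) * ((n + 1 : ℕ) : ℚ) := by
              exact_mod_cast R3
            push_cast at h
            linear_combination h
          have q4 : ((n + (j + 1) + 1).choose (j + 1) : ℚ) * ((n : ℚ) + j + 3)
              = ((n + (j + 1) + 2).choose (j + 1) : ℚ) * ((n : ℚ) + 2) := by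
            have h : ((n + (j + 1) + 1).choose (j + 1) : ℚ) * ((n + (j + 1) + 2 : ℕ) : ℚ)
                = ((n + (j + 1) + 2).choose (j + 1) : ℚ) * ((n + 2 : ℕ) : ℚ) := by
              exact_mod_cast R4
            push_cast at h
            linear_combination h
          have q5 : ((n + 1).choose (j + 1) : ℚ) * ((j : ℚ) + 1)
              = ((n + 1).choose j : ℚ) * ((n : ℚ) + 1 - j) := by
            rw [show ((n : ℚ) + 1 - j) = ((n + 1 - j : ℕ) : ℚ) by
              rw [Nat.cast_sub (by omega : j ≤ n + 1)]; push_cast; ring]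
            exact_mod_cast R5
          have q6 : ((n + (j + 1)).choose (j + 1) : ℚ) * ((j : ℚ) + 1)
              = ((n + (j + 1)).choose j : ℚ) * ((n : ℚ) + 1) := by
            exact_mod_cast R6
          have hd1 : ((n : ℚ) - j) ≠ 0 := by
            have : (j : ℚ) < n := by exact_mod_cast (by omega : j < n)
            intro h; linarith
          have hd2 : ((n : ℚ) + 1 - j) ≠ 0 := by
            have : (j : ℚ) ≤ n := by exact_mod_cast hjn'
            intro h; linarith
          have hn1 : ((n : ℚ) + 1) ≠ 0 := by positivity
          have hn2 : ((n : ℚ) + 2) ≠ 0 := by positivity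
          have he1 : ((n + 1).choose (j + 1) : ℚ)
              = (n.choose (j + 1) : ℚ) * ((n : ℚ) + 1) / ((n : ℚ) - j) := by
            rw [eq_div_iff hd1]; linear_combination - q1
          have he2 : ((n + 2).choose (j + 1) : ℚ)
              = (n.choose (j + 1) : ℚ) * ((n : ℚ) + 1) * ((n : ℚ) + 2)
                / (((n : ℚ) - j) * ((n : ℚ) + 1 - j)) := by
            rw [eq_div_iff (mul_ne_zero hd1 hd2)]
            linear_combination (-(n : ℚ) - 2) * q1 - ((n : ℚ) - j) * q2
          have hf1 : ((n + (j + 1) + 1).choose (j + 1) : ℚ)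
              = ((n + (j + 1)).choose (j + 1) : ℚ) * ((n : ℚ) + j + 2) / ((n : ℚ) + 1) := by
            rw [eq_div_iff hn1]; linear_combination - q3
          have hf2 : ((n + (j + 1) + 2).choose (j + 1) : ℚ)
              = ((n + (j + 1)).choose (j + 1) : ℚ) * ((n : ℚ) + j + 2) * ((n : ℚ) + j + 3)
                / (((n : ℚ) + 1) * ((n : ℚ) + 2)) := by
            rw [eq_div_iff (mul_ne_zero hn1 hn2)]
            linear_combination (-(n : ℚ) - j - 3) * q3 - ((n : ℚ) + 1) * q4
          have hg1 : ((n + 1).choose j : ℚ)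
              = (n.choose (j + 1) : ℚ) * ((n : ℚ) + 1) * ((j : ℚ) + 1)
                / (((n : ℚ) - j) * ((n : ℚ) + 1 - j)) := by
            rw [eq_div_iff (mul_ne_zero hd1 hd2)]
            linear_combination (-(j : ℚ) - 1) * q1 - ((n : ℚ) - j) * q5
          have hg2 : ((n + (j + 1)).choose j : ℚ)
              = ((n + (j + 1)).choose (j + 1) : ℚ) * ((j : ℚ) + 1) / ((n : ℚ) + 1) := by
            rw [eq_div_iff hn1]; linear_combination - q6
          simp only [aperyF, aperyB]
          rw [show n + 1 + (j + 1) = n + (j + 1) + 1 by omega,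
            show n + 2 + (j + 1) = n + (j + 1) + 2 by omega,
            show n + 1 + j = n + (j + 1) by omega]
          qify
          push_cast
          rw [he1, he2, hf1, hf2, hg1, hg2]
          field_simp
          ring

theorem stmt_11 (n : ℕ) :
    ((n : ℤ) + 1) ^ 3 * apery n
      - (2 * (n : ℤ) + 3) * (17 * (n : ℤ) ^ 2 + 51 * n + 39) * apery (n + 1)
      + ((n : ℤ) + 2) ^ 3 * apery (n + 2) = 0 := by
  have hsum : ∑ k ∈ Finset.range (n + 3),
      (((n : ℤ) + 1) ^ 3 * aperyF n k
        - (2 * (n : ℤ) + 3) * (17 * (n : ℤ) ^ 2 + 51 * n + 39) * aperyF (n + 1) k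
        + ((n : ℤ) + 2) ^ 3 * aperyF (n + 2) k)
      = ∑ k ∈ Finset.range (n + 3), (aperyG n (k + 1) - aperyG n k) :=
    Finset.sum_congr rfl fun k _ => apery_pointwise n k
  rw [Finset.sum_range_sub (aperyG n) (n + 3)] at hsum
  have hGtop : aperyG n (n + 3) = 0 := by
    show aperyB n (n + 2) = 0
    simp [aperyB, Nat.choose_eq_zero_of_lt (by omega : n + 1 < n + 2)]
  have hG0 : aperyG n 0 = 0 := rfl
  rw [hGtop, hG0, sub_zero] at hsum
  have h0 : apery n = ∑ k ∈ Finset.range (n + 3), aperyF n k := by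
    rw [show n + 3 = (n + 1) + 1 + 1 by omega, Finset.sum_range_succ, Finset.sum_range_succ]
    have z1 : aperyF n (n + 1) = 0 := by
      simp [aperyF, Nat.choose_eq_zero_of_lt (by omega : n < n + 1)]
    have z2 : aperyF n (n + 1 + 1) = 0 := by
      simp [aperyF, Nat.choose_eq_zero_of_lt (by omega : n < n + 1 + 1)]
    rw [z1, z2, add_zero, add_zero]
    rfl
  have h1 : apery (n + 1) = ∑ k ∈ Finset.range (n + 3), aperyF (n + 1) k := by
    rw [show n + 3 = (n + 2) + 1 by omega, Finset.sum_range_succ]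
    have z : aperyF (n + 1) (n + 2) = 0 := by
      simp [aperyF, Nat.choose_eq_zero_of_lt (by omega : n + 1 < n + 2)]
    rw [z, add_zero]
    rfl
  have h2 : apery (n + 2) = ∑ k ∈ Finset.range (n + 3), aperyF (n + 2) k := rfl
  rw [h0, h1, h2, Finset.mul_sum, Finset.mul_sum, Finset.mul_sum,
    ← Finset.sum_sub_distrib, ← Finset.sum_add_distrib]
  exact hsum
end

section
/- For every natural number n and real x, ∑_{k=0}^n C(n,k)² (x-1)^{n-k} (x+1)^k / 2^n equals the Legendre polynomial P_n(x). -/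
open Nat

/-- The nth Legendre polynomial via Rodrigues' formula. -/
noncomputable def legendre (n : ℕ) (x : ℝ) : ℝ :=
  (1 / (2 ^ n * (n ! : ℝ))) * iteratedDeriv n (fun y : ℝ => (y ^ 2 - 1) ^ n) x

open Polynomial in
lemma iterDeriv_poly (p : ℝ[X]) (n : ℕ) :
    iteratedDeriv n (fun y : ℝ => p.eval y) = fun y => (derivative^[n] p).eval y := by
  induction n with
  | zero => simp
  | succ n ih =>
    rw [iteratedDeriv_succ, ih, Function.iterate_succ_apply']
    funext y
    exact Polynomial.deriv _

open Polynomial in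
theorem stmt_12 (n : ℕ) (x : ℝ) :
    (∑ k ∈ Finset.range (n + 1),
        (n.choose k : ℝ) ^ 2 * (x - 1) ^ (n - k) * (x + 1) ^ k) / 2 ^ n
      = legendre n x := by
  unfold legendre
  have hf : (fun y : ℝ => (y ^ 2 - 1) ^ n)
      = fun y : ℝ => (((X - 1) ^ n * (X + 1) ^ n : ℝ[X])).eval y := by
    funext y; simp [← mul_pow]; ring
  rw [hf, iterDeriv_poly, Polynomial.iterate_derivative_mul]
  have h1 : ∀ k : ℕ, (derivative^[n - k] ((X - 1 : ℝ[X]) ^ n))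
      = n.descFactorial (n - k) • (X - 1 : ℝ[X]) ^ (n - (n - k)) := fun k => by
    simpa using Polynomial.iterate_derivative_X_sub_pow n (n - k) (1 : ℝ)
  have h2 : ∀ k : ℕ, (derivative^[k] ((X + 1 : ℝ[X]) ^ n))
      = n.descFactorial k • (X + 1 : ℝ[X]) ^ (n - k) := fun k => by
    simpa using Polynomial.iterate_derivative_X_add_pow n k (1 : ℝ)
  simp only [h1, h2, Polynomial.eval_finset_sum, Polynomial.eval_smul, Polynomial.eval_mul,
    Polynomial.eval_pow, Polynomial.eval_sub, Polynomial.eval_add, Polynomial.eval_one,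
    Polynomial.eval_X, Polynomial.eval_natCast, nsmul_eq_mul]
  rw [← Finset.sum_range_reflect]
  rw [div_eq_iff (by positivity : (2:ℝ)^n ≠ 0), Finset.mul_sum, Finset.sum_mul]
  refine Finset.sum_congr rfl fun j hk => ?_
  simp only [Finset.mem_range, Nat.add_sub_cancel] at hk ⊢
  have hkn : j ≤ n := by omega
  have e1 : n - (n - j) = j := by omega
  rw [e1, Nat.descFactorial_eq_factorial_mul_choose n j,
    Nat.descFactorial_eq_factorial_mul_choose n (n - j), Nat.choose_symm hkn]
  have key : ((n ! : ℕ) : ℝ) = (n.choose j : ℝ) * (j ! : ℝ) * ((n - j)! : ℝ) := by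
    exact_mod_cast (Nat.choose_mul_factorial_mul_factorial hkn).symm
  have hc : (0:ℝ) < (n.choose j : ℝ) := by exact_mod_cast Nat.choose_pos hkn
  rw [key]
  push_cast
  have hj : (0:ℝ) < (j ! : ℝ) := by positivity
  have hnj : (0:ℝ) < ((n - j)! : ℝ) := by positivity
  field_simp
end

section
/- The sums S₁(n) = ∑_{k=0}^n C(n,k)·C(-n-1,k)·((1-x)/2)^k (with C(-n-1,k) = (-n-1)(-n-2)···(-n-k)/k!) and S₂(n) = 2^{-n} ∑_{k=0}^n C(n,k)² (x-1)^{n-k}(x+1)^k both satisfy the same recurrence (n+1) S(n) - (2n+3) x S(n+1) + (n+2) S(n+2) = 0 and agree for n = 0 and n = 1; hence S₁(n) = S₂(n) for all n. -/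
/-!
Both sums are the value at `y = (1 - x) / 2` of Mathlib's shifted Legendre polynomial
`P̃ₙ = ∑ (-1)ᵏ C(n,k) C(n+k,n) Xᵏ`: for `S₁` because `C(-n-1,k) = (-1)ᵏ C(n+k,n)`, for `S₂` by
the Leibniz rule applied to the Rodrigues formula `n! P̃ₙ = Dⁿ((1 - X)ⁿ Xⁿ)`. The recurrence is
Bonnet's recurrence `(n+2) P̃ₙ₊₂ = (2n+3)(1 - 2X) P̃ₙ₊₁ - (n+1) P̃ₙ`, checked coefficientwise.
-/

open Nat Polynomial

namespace Nat

variable {R : Type*} [CommRing R]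

theorem cast_add_one_mul_choose_succ (m k : ℕ) :
    ((k : R) + 1) * (m + 1).choose (k + 1) = ((m : R) + 1) * m.choose k := by
  have := congrArg (Nat.cast : ℕ → R) (add_one_mul_choose_eq m k)
  push_cast at this
  linear_combination -this

theorem cast_add_one_mul_choose_succ_right (m k : ℕ) :
    ((k : R) + 1) * m.choose (k + 1) = ((m : R) - k) * m.choose k := by
  rcases le_or_gt k m with h | h
  · have := congrArg (Nat.cast : ℕ → R) (choose_succ_right_eq m k)
    push_cast [h] at this
    linear_combination this
  · simp [choose_eq_zero_of_lt h, choose_eq_zero_of_lt (h.trans (lt_add_one k))]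

theorem cast_add_one_mul_choose (m k : ℕ) :
    ((m : R) + 1) * m.choose k = ((m : R) + 1 - k) * (m + 1).choose k := by
  rw [← cast_add_one_mul_choose_succ, cast_add_one_mul_choose_succ_right]
  push_cast
  ring

theorem choose_mul_descFactorial_sub_mul_descFactorial {n k : ℕ} (h : k ≤ n) :
    n.choose k * n.descFactorial (n - k) * n.descFactorial k = n ! * n.choose k ^ 2 := by
  rw [descFactorial_eq_factorial_mul_choose, descFactorial_eq_factorial_mul_choose,
    choose_symm h, ← choose_mul_factorial_mul_factorial h]
  ring

theorem prod_range_neg_sub_div_factorial {K : Type*} [Field K] [CharZero K] (n k : ℕ) :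
    (∏ j ∈ Finset.range k, (-(n : K) - 1 - j)) / k ! = (-1) ^ k * (n + k).choose n := by
  have hprod : ∏ j ∈ Finset.range k, (-(n : K) - 1 - j)
      = (-1) ^ k * ((n + 1).ascFactorial k : ℕ) := by
    rw [ascFactorial_eq_prod_range, Nat.cast_prod,
      show (-1 : K) ^ k = ∏ _j ∈ Finset.range k, (-1 : K) by simp, ← Finset.prod_mul_distrib]
    refine Finset.prod_congr rfl fun j _ => ?_
    push_cast
    ring
  have : (k ! : K) ≠ 0 := Nat.cast_ne_zero.mpr (factorial_ne_zero k)
  rw [hprod, ascFactorial_eq_factorial_mul_choose, ← choose_symm_add]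
  push_cast
  field_simp

end Nat

namespace Polynomial

/-- The coefficient of `X ^ (k + 1)` in Bonnet's recurrence, with the signs `(-1) ^ (k + 1)`
removed. -/
theorem shiftedLegendre_coeff_recurrence (n k : ℕ) :
    (n + 1) * (n.choose (k + 1) * (n + (k + 1)).choose n)
      + (n + 2) * ((n + 2).choose (k + 1) * (n + 2 + (k + 1)).choose (n + 2))
    = (2 * n + 3) * ((n + 1).choose (k + 1) * (n + 1 + (k + 1)).choose (n + 1)
      + 2 * ((n + 1).choose k * (n + 1 + k).choose (n + 1))) := by
  rw [choose_symm_add, choose_symm_add, choose_symm_add, choose_symm_add]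
  rw [show n + (k + 1) = n + k + 1 by ring, show n + 2 + (k + 1) = n + k + 1 + 1 + 1 by ring,
    show n + 1 + (k + 1) = n + k + 1 + 1 by ring, show n + 1 + k = n + k + 1 by ring,
    show n + 2 = n + 1 + 1 from rfl]
  zify
  -- After multiplying by `(k + 1) ^ 2`, every product of binomial coefficients in the identity
  -- is a polynomial in `n, k` times `P₁ * P₂`.
  set P₁ : ℤ := Nat.cast ((n + 1).choose k)
  set P₂ : ℤ := Nat.cast ((n + k + 1).choose k)
  have h₀ : ((k : ℤ) + 1) ^ 2 * (n.choose (k + 1) * (n + k + 1).choose (k + 1))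
      = (n - k) * (n + 1 - k) * P₁ * P₂ := by
    have ha := cast_add_one_mul_choose_succ_right (R := ℤ) n k
    have hb := cast_add_one_mul_choose_succ_right (R := ℤ) (n + k + 1) k
    have hc := cast_add_one_mul_choose (R := ℤ) n k
    push_cast at hb
    linear_combination ((k : ℤ) + 1) * ((n + k + 1).choose (k + 1) : ℕ) * ha
      + (n - k) * (n.choose k : ℕ) * hb + (n - k) * P₂ * hc
  have h₁ : ((k : ℤ) + 1) ^ 2 * ((n + 1).choose (k + 1) * (n + k + 1 + 1).choose (k + 1))
      = (n + 1 - k) * (n + k + 2) * P₁ * P₂ := by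
    have ha := cast_add_one_mul_choose_succ_right (R := ℤ) (n + 1) k
    have hb := cast_add_one_mul_choose_succ (R := ℤ) (n + k + 1) k
    push_cast at ha hb
    linear_combination ((k : ℤ) + 1) * ((n + k + 1 + 1).choose (k + 1) : ℕ) * ha
      + (n + 1 - k) * P₁ * hb
  have h₂ : ((k : ℤ) + 1) ^ 2 * ((n + 1 + 1).choose (k + 1) * (n + k + 1 + 1 + 1).choose (k + 1))
      = (n + k + 2) * (n + k + 3) * P₁ * P₂ := by
    have ha := cast_add_one_mul_choose_succ (R := ℤ) (n + 1) k
    have hb := cast_add_one_mul_choose_succ (R := ℤ) (n + k + 1 + 1) k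
    have hc := cast_add_one_mul_choose (R := ℤ) (n + k + 1) k
    push_cast at ha hb hc
    linear_combination ((k : ℤ) + 1) * ((n + k + 1 + 1 + 1).choose (k + 1) : ℕ) * ha
      + (n + 2) * P₁ * hb - (n + k + 3) * P₁ * hc
  apply mul_left_cancel₀ (pow_ne_zero 2 (show ((k : ℤ) + 1) ≠ 0 by positivity))
  linear_combination (n + 1) * h₀ + (n + 2) * h₂ - (2 * n + 3) * h₁

theorem add_two_mul_shiftedLegendre_add_two (n : ℕ) :
    (n + 2 : ℤ[X]) * shiftedLegendre (n + 2)
      = (2 * n + 3 : ℤ[X]) * (1 - 2 * X) * shiftedLegendre (n + 1)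
        - (n + 1 : ℤ[X]) * shiftedLegendre n := by
  ext (_ | k) <;> simp only [add_mul, sub_mul, mul_sub, one_mul, mul_assoc, coeff_add, coeff_sub,
    coeff_natCast_mul, coeff_ofNat_mul, coeff_X_mul, coeff_X_mul_zero, coeff_shiftedLegendre]
  · simp only [pow_zero, choose_zero_right, add_zero, choose_self, cast_one]
    ring
  · have := congrArg (Nat.cast : ℕ → ℤ) (shiftedLegendre_coeff_recurrence n k)
    push_cast at this
    linear_combination (-1) ^ (k + 1) * this

theorem shiftedLegendre_eq_sum_choose_sq (n : ℕ) :
    shiftedLegendre n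
      = ∑ k ∈ Finset.range (n + 1), (n.choose k ^ 2 : ℤ[X]) * (-X) ^ (n - k) * (1 - X) ^ k := by
  refine nat_mul_inj' ?_ (factorial_ne_zero n)
  rw [factorial_mul_shiftedLegendre_eq, mul_comm, iterate_derivative_mul, Finset.mul_sum]
  refine Finset.sum_congr rfl fun k hk => ?_
  have hkn : k ≤ n := Nat.lt_succ_iff.mp (Finset.mem_range.mp hk)
  rw [← X_pow_comp (p := 1 - X), iterate_derivative_comp_one_sub_X,
    iterate_derivative_X_pow_eq_natCast_mul, iterate_derivative_X_pow_eq_natCast_mul,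
    mul_comp, natCast_comp, X_pow_comp, Nat.sub_sub_self hkn, nsmul_eq_mul, neg_pow (X : ℤ[X])]
  have := congrArg (Nat.cast : ℕ → ℤ[X]) (choose_mul_descFactorial_sub_mul_descFactorial hkn)
  push_cast at this
  linear_combination (-1) ^ (n - k) * X ^ (n - k) * (1 - X) ^ k * this

section Evaluation

variable {R : Type*} [CommRing R] {K : Type*} [Field K] [CharZero K]

theorem aeval_shiftedLegendre (n : ℕ) (y : R) :
    aeval y (shiftedLegendre n)
      = ∑ k ∈ Finset.range (n + 1), (-1) ^ k * n.choose k * (n + k).choose n * y ^ k := by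
  simp [shiftedLegendre]

theorem aeval_shiftedLegendre_recurrence (n : ℕ) (y : R) :
    ((n : R) + 1) * aeval y (shiftedLegendre n)
      - (2 * n + 3) * (1 - 2 * y) * aeval y (shiftedLegendre (n + 1))
      + ((n : R) + 2) * aeval y (shiftedLegendre (n + 2)) = 0 := by
  have := congrArg (aeval y) (add_two_mul_shiftedLegendre_add_two n)
  simp only [map_mul, map_sub, map_add, map_natCast, map_ofNat, map_one, aeval_X] at this
  linear_combination this

theorem sum_choose_mul_prod_range_eq_aeval_shiftedLegendre (n : ℕ) (y : K) :
    ∑ k ∈ Finset.range (n + 1),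
      (n.choose k : K) * ((∏ j ∈ Finset.range k, (-(n : K) - 1 - j)) / k !) * y ^ k
      = aeval y (shiftedLegendre n) := by
  rw [aeval_shiftedLegendre]
  refine Finset.sum_congr rfl fun k _ => ?_
  rw [prod_range_neg_sub_div_factorial]
  ring

theorem two_zpow_neg_mul_sum_eq_aeval_shiftedLegendre (n : ℕ) (x : K) :
    (2 : K) ^ (-(n : ℤ)) * ∑ k ∈ Finset.range (n + 1),
      (n.choose k : K) ^ 2 * (x - 1) ^ (n - k) * (x + 1) ^ k
      = aeval ((1 - x) / 2) (shiftedLegendre n) := by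
  rw [shiftedLegendre_eq_sum_choose_sq, map_sum, zpow_neg, zpow_natCast, Finset.mul_sum]
  refine Finset.sum_congr rfl fun k hk => ?_
  obtain ⟨m, rfl⟩ := Nat.exists_eq_add_of_le' (Nat.lt_succ_iff.mp (Finset.mem_range.mp hk))
  simp only [Nat.add_sub_cancel, map_mul, map_pow, map_natCast, map_neg, map_sub, map_one, aeval_X]
  rw [show -((1 - x) / 2) = (x - 1) / 2 by ring, show 1 - (1 - x) / 2 = (x + 1) / 2 by ring,
    div_pow, div_pow, pow_add]
  field_simp

end Evaluation

end Polynomial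

theorem stmt_14 (x : ℝ) (S₁ S₂ : ℕ → ℝ)
    (hS₁ : ∀ n : ℕ, S₁ n = ∑ k ∈ Finset.range (n + 1),
      (n.choose k : ℝ) * ((∏ j ∈ Finset.range k, (-(n : ℝ) - 1 - j)) / k !) * ((1 - x) / 2) ^ k)
    (hS₂ : ∀ n : ℕ, S₂ n = (2 : ℝ) ^ (-(n : ℤ)) * ∑ k ∈ Finset.range (n + 1),
      (n.choose k : ℝ) ^ 2 * (x - 1) ^ (n - k) * (x + 1) ^ k) :
    (∀ n : ℕ, ((n : ℝ) + 1) * S₁ n - (2 * n + 3) * x * S₁ (n + 1) + ((n : ℝ) + 2) * S₁ (n + 2) = 0)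
    ∧ (∀ n : ℕ, ((n : ℝ) + 1) * S₂ n - (2 * n + 3) * x * S₂ (n + 1) + ((n : ℝ) + 2) * S₂ (n + 2) = 0)
    ∧ S₁ 0 = S₂ 0 ∧ S₁ 1 = S₂ 1 ∧ ∀ n : ℕ, S₁ n = S₂ n := by
  have h₁ (n : ℕ) : S₁ n = aeval ((1 - x) / 2) (shiftedLegendre n) :=
    (hS₁ n).trans (sum_choose_mul_prod_range_eq_aeval_shiftedLegendre n _)
  have h₂ (n : ℕ) : S₂ n = aeval ((1 - x) / 2) (shiftedLegendre n) :=
    (hS₂ n).trans (two_zpow_neg_mul_sum_eq_aeval_shiftedLegendre n x)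
  have heq (n : ℕ) : S₁ n = S₂ n := (h₁ n).trans (h₂ n).symm
  have hrec (n : ℕ) :
      ((n : ℝ) + 1) * S₁ n - (2 * n + 3) * x * S₁ (n + 1) + ((n : ℝ) + 2) * S₁ (n + 2) = 0 := by
    rw [h₁, h₁, h₁]
    linear_combination aeval_shiftedLegendre_recurrence n ((1 - x) / 2)
  exact ⟨hrec, fun n => by simpa only [heq] using hrec n, heq 0, heq 1, heq⟩
end
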